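/- Let v be the 2m × 2m block matrix [[L, Lᵀ],[L, Lᵀ]] where L is the m × m lower-triangular all-ones matrix. Then the eigenvalues of v are: m + 1 with multiplicity 1, the eigenvalue 1 with multiplicity m - 1, and 0 with multiplicity m. Equivalently, the characteristic polynomial of v is x^m * (x - 1)^(m-1) * (x - (m+1)). -/

import Mathlib

/-!
Factor `v = [I; I] * [L, Lᵀ]`; swapping the factors of a product only changes the characteristic
polynomial by a power of `X`, so `χ_v = X ^ m * χ_{L + Lᵀ}`. Moreover `L + Lᵀ = I + J` with `J`
the rank-one all-ones matrix, whose characteristic polynomial is `X ^ m - m X ^ (m - 1)`.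
-/

open Matrix Polynomial

namespace Matrix

theorem of_le_add_transpose {n R : Type*} [LinearOrder n] [NonAssocSemiring R] :
    (of fun i j : n => if j ≤ i then (1 : R) else 0) + (of fun i j => if j ≤ i then 1 else 0)ᵀ =
      vecMulVec 1 1 + 1 := by
  ext i j
  rcases lt_trichotomy i j with h | rfl | h
  · simp [h.not_ge, h.le, h.ne]
  · simp
  · simp [h.not_ge, h.le, h.ne']

variable {n R : Type*} [Fintype n] [DecidableEq n] [CommRing R]

theorem charpoly_fromBlocks_self (A B : Matrix n n R) :
    (fromBlocks A B A B).charpoly = X ^ Fintype.card n * (A + B).charpoly := by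
  have hfactor : fromBlocks A B A B = fromRows (1 : Matrix n n R) 1 * fromCols A B := by
    rw [fromRows_mul_fromCols, Matrix.one_mul, Matrix.one_mul]
  rw [hfactor, charpoly_mul_comm_of_le _ _ (by simp), fromCols_mul_fromRows, Fintype.card_sum,
    Nat.add_sub_cancel, mul_one, mul_one]

theorem charpoly_vecMulVec_add_scalar (u v : n → R) (μ : R) :
    (vecMulVec u v + scalar n μ).charpoly =
      (X - C μ) ^ Fintype.card n - (u ⬝ᵥ v) • (X - C μ) ^ (Fintype.card n - 1) := by
  have h := charpoly_sub_scalar (vecMulVec u v) (-μ)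
  rw [map_neg, sub_neg_eq_add, map_neg, ← sub_eq_add_neg] at h
  rw [h, charpoly_vecMulVec, sub_comp, smul_comp, pow_comp, pow_comp, X_comp]

end Matrix

theorem v_charpoly (m : ℕ) (hm : 1 ≤ m)
    (L : Matrix (Fin m) (Fin m) ℝ)
    (hL : L = Matrix.of fun i j => if j ≤ i then 1 else 0)
    (v : Matrix (Fin m ⊕ Fin m) (Fin m ⊕ Fin m) ℝ)
    (hv : v = Matrix.fromBlocks L Lᵀ L Lᵀ) :
    v.charpoly = Polynomial.X ^ m * (Polynomial.X - 1) ^ (m - 1) *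
      (Polynomial.X - Polynomial.C ((m : ℝ) + 1)) := by
  have hsum : L + Lᵀ = vecMulVec 1 1 + scalar (Fin m) 1 := by
    rw [hL, of_le_add_transpose, scalar_apply, diagonal_one]
  obtain ⟨k, rfl⟩ := Nat.exists_eq_add_of_le' hm
  rw [hv, charpoly_fromBlocks_self, hsum, charpoly_vecMulVec_add_scalar]
  simp only [Fintype.card_fin, one_dotProduct_one, add_tsub_cancel_right, Algebra.smul_def,
    algebraMap_eq, map_one, map_add, map_natCast, Nat.cast_add, Nat.cast_one]
  ring
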